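/- arXiv:2205.06589 — 6 statements merged into one kernel-verified Lean document; each statement's English description precedes it below -/
import Mathlib

section
/- Let M = M₁ ∘ M₀ be a composite of functors M₀ : A₀ ⥤ A and M₁ : A ⥤ B such that the density comonads D_M of M and D_{M₁} of M₁ both exist. Then the unique natural transformation λ : D_M ⟹ D_{M₁} satisfying λ M ∘ η = η¹ M₀ (where η, η¹ are the respective universal transformations) is a morphism of comonads. -/
/-!
Both identities are equalities of transformations out of the density comonad `D_M`, so by
the uniqueness half of its universal property it suffices to check them after precomposing
with `η`. There, `λ M ∘ η = η¹ M₀` turns each side into the corresponding defining equation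
of the counit or comultiplication along `η` or `η¹`.
-/

open CategoryTheory

universe x₀ x u₀ u w v

/-- `huniv` says that `(D, η)` is a left Kan extension of `G` along `F`. -/
theorem CategoryTheory.NatTrans.ext_of_existsUnique_lift {C B E : Type*} [Category C]
    [Category B] [Category E] {F : C ⥤ B} {G : C ⥤ E} {D : B ⥤ E} (η : G ⟶ F ⋙ D)
    (huniv : ∀ (K : B ⥤ E) (φ : G ⟶ F ⋙ K),
      ∃! s : D ⟶ K, ∀ a : C, φ.app a = η.app a ≫ s.app (F.obj a))
    {K : B ⥤ E} {s t : D ⟶ K}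
    (h : ∀ a : C, η.app a ≫ s.app (F.obj a) = η.app a ≫ t.app (F.obj a)) :
    s = t := by
  obtain ⟨u, -, huq⟩ := huniv K (η ≫ Functor.whiskerLeft F s)
  exact (huq s fun _ => rfl).trans (huq t fun a => h a).symm

theorem stmt_4_general {A₀ : Type u₀} {A : Type u} {B : Type v}
    [Category.{x₀} A₀] [Category.{x} A] [Category.{w} B]
    (M₀ : A₀ ⥤ A) (M₁ : A ⥤ B) (Dm D₁ : Comonad B)
    (η : M₀ ⋙ M₁ ⟶ (M₀ ⋙ M₁) ⋙ Dm.toFunctor)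
    (η₁ : M₁ ⟶ M₁ ⋙ D₁.toFunctor)
    (huniv : ∀ (K : B ⥤ B) (φ : M₀ ⋙ M₁ ⟶ (M₀ ⋙ M₁) ⋙ K),
      ∃! s : Dm.toFunctor ⟶ K, ∀ a : A₀, φ.app a = η.app a ≫ s.app (M₁.obj (M₀.obj a)))
    (hDε : ∀ a : A₀, η.app a ≫ Dm.ε.app (M₁.obj (M₀.obj a)) = 𝟙 (M₁.obj (M₀.obj a)))
    (hDδ : ∀ a : A₀, η.app a ≫ Dm.δ.app (M₁.obj (M₀.obj a))
        = η.app a ≫ Dm.toFunctor.map (η.app a))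
    (hEε : ∀ b : A, η₁.app b ≫ D₁.ε.app (M₁.obj b) = 𝟙 (M₁.obj b))
    (hEδ : ∀ b : A, η₁.app b ≫ D₁.δ.app (M₁.obj b)
        = η₁.app b ≫ D₁.toFunctor.map (η₁.app b))
    (lam : Dm.toFunctor ⟶ D₁.toFunctor)
    (hlam : ∀ a : A₀, η.app a ≫ lam.app (M₁.obj (M₀.obj a)) = η₁.app (M₀.obj a)) :
    (∀ X : B, lam.app X ≫ D₁.ε.app X = Dm.ε.app X) ∧
    (∀ X : B, lam.app X ≫ D₁.δ.app X
        = Dm.δ.app X ≫ Dm.toFunctor.map (lam.app X) ≫ lam.app (D₁.toFunctor.obj X)) := by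
  have hε : lam ≫ D₁.ε = Dm.ε := NatTrans.ext_of_existsUnique_lift η huniv fun a => by
    dsimp only [Functor.comp_obj, NatTrans.comp_app]
    rw [reassoc_of% hlam a, hEε, hDε]
  have hδ : lam ≫ D₁.δ = Dm.δ ≫ Functor.whiskerRight lam Dm.toFunctor ≫
      Functor.whiskerLeft D₁.toFunctor lam :=
    NatTrans.ext_of_existsUnique_lift η huniv fun a => by
      dsimp only [Functor.comp_obj, NatTrans.comp_app, Functor.whiskerLeft_app,
        Functor.whiskerRight_app]
      calc η.app a ≫ lam.app (M₁.obj (M₀.obj a)) ≫ D₁.δ.app (M₁.obj (M₀.obj a))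
          = η₁.app (M₀.obj a) ≫ D₁.toFunctor.map (η₁.app (M₀.obj a)) := by
            rw [reassoc_of% hlam a, hEδ]
        _ = η.app a ≫ Dm.δ.app (M₁.obj (M₀.obj a)) ≫ Dm.toFunctor.map (lam.app _) ≫
              lam.app (D₁.toFunctor.obj (M₁.obj (M₀.obj a))) := by
            rw [reassoc_of% hDδ a, ← Functor.map_comp_assoc, hlam a, lam.naturality,
              reassoc_of% hlam a]
  exact ⟨fun X => congr_app hε X, fun X => congr_app hδ X⟩

/-- for a composite `M = M₀ ⋙ M₁` such that the density comonads `Dm` of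
`M` and `D₁` of `M₁` exist (with universal transformations `η`, `η₁` and comonad
structures determined by them), the unique natural transformation
`lam : Dm ⟹ D₁` satisfying `lam M ∘ η = η₁ M₀` is a morphism of comonads. -/
theorem stmt_4 {A₀ : Type u₀} {A : Type u} {B : Type v}
    [Category.{x₀} A₀] [Category.{x} A] [Category.{w} B]
    (M₀ : A₀ ⥤ A) (M₁ : A ⥤ B) (Dm D₁ : Comonad B)
    (η : M₀ ⋙ M₁ ⟶ (M₀ ⋙ M₁) ⋙ Dm.toFunctor)
    (η₁ : M₁ ⟶ M₁ ⋙ D₁.toFunctor)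
    (huniv : ∀ (K : B ⥤ B) (φ : M₀ ⋙ M₁ ⟶ (M₀ ⋙ M₁) ⋙ K),
      ∃! s : Dm.toFunctor ⟶ K, ∀ a : A₀, φ.app a = η.app a ≫ s.app (M₁.obj (M₀.obj a)))
    (huniv₁ : ∀ (K : B ⥤ B) (φ : M₁ ⟶ M₁ ⋙ K),
      ∃! s : D₁.toFunctor ⟶ K, ∀ b : A, φ.app b = η₁.app b ≫ s.app (M₁.obj b))
    (hDε : ∀ a : A₀, η.app a ≫ Dm.ε.app (M₁.obj (M₀.obj a)) = 𝟙 (M₁.obj (M₀.obj a)))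
    (hDδ : ∀ a : A₀, η.app a ≫ Dm.δ.app (M₁.obj (M₀.obj a))
        = η.app a ≫ Dm.toFunctor.map (η.app a))
    (hEε : ∀ b : A, η₁.app b ≫ D₁.ε.app (M₁.obj b) = 𝟙 (M₁.obj b))
    (hEδ : ∀ b : A, η₁.app b ≫ D₁.δ.app (M₁.obj b)
        = η₁.app b ≫ D₁.toFunctor.map (η₁.app b))
    (lam : Dm.toFunctor ⟶ D₁.toFunctor)
    (hlam : ∀ a : A₀, η.app a ≫ lam.app (M₁.obj (M₀.obj a)) = η₁.app (M₀.obj a)) :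
    (∀ X : B, lam.app X ≫ D₁.ε.app X = Dm.ε.app X) ∧
    (∀ X : B, lam.app X ≫ D₁.δ.app X
        = Dm.δ.app X ≫ Dm.toFunctor.map (lam.app X) ≫ lam.app (D₁.toFunctor.obj X)) :=
  stmt_4_general M₀ M₁ Dm D₁ η η₁ huniv hDε hDδ hEε hEδ lam hlam
end

section
/- Let M : A ⥤ B be a functor from a discrete category A with density comonad D, let ξ : X ⟶ D(X) be a D-coalgebra, and let ι_C : C ⟶ X be a component inclusion with C connected. If ξ ∘ ι_C factors as ι_f ∘ z through the coproduct inclusion ι_f : M(A) ⟶ D(X) associated with f : M(A) ⟶ X, then ι_C = f ∘ z and ι_f = ξ ∘ f. -/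
/-!
Post-composing `ξ ∘ ι_C = ι_f ∘ z` with the counit gives `ι_C = f ∘ z`. Post-composing with
`δ_X = D(ξ)` (on the image of `ξ`) yields two factorizations of the same map `C ⟶ D(D(X))`
through the coproduct inclusions, namely `ι_{ι_f} ∘ z` and `ι_{ξ ∘ f} ∘ z`; connectedness of
`C` forces them to use the same inclusion, so `ι_f = ξ ∘ f`.
-/

open CategoryTheory Limits

universe w v

variable {B : Type v} [Category.{w} B]

/-- An object `C` is connected if every morphism from `C` into a coproduct factors
uniquely through one of the coproduct inclusions. -/
def Connected' (C : B) : Prop :=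
  ∀ {I : Type w} (f : I → B) (c : Cofan f), IsColimit c →
    ∀ g : C ⟶ c.pt, ∃! p : Σ i : I, C ⟶ f i, p.2 ≫ c.inj p.1 = g

lemma Connected'.eq_of_comp_inj_eq {C : B} (hC : Connected' C) {I : Type w} {f : I → B}
    {c : Cofan f} (hc : IsColimit c) {p q : Σ i, C ⟶ f i}
    (h : p.2 ≫ c.inj p.1 = q.2 ≫ c.inj q.1) : p = q := by
  obtain ⟨r, -, hr⟩ := hC f c hc (q.2 ≫ c.inj q.1)
  exact (hr p h).trans (hr q rfl).symm

section DensityComonad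

variable {J : Type w} {M : Discrete J ⥤ B} {D : B ⥤ B}
  {ι : ∀ (A : Discrete J) {X : B}, (M.obj A ⟶ X) → (M.obj A ⟶ D.obj X)}

lemma ι_comp_map
    (hc : ∀ X : B, IsColimit (Cofan.mk (D.obj X)
      (fun p : Σ A : Discrete J, (M.obj A ⟶ X) => ι p.1 p.2)))
    (hmap : ∀ {X Y : B} (h : X ⟶ Y),
      D.map h = (hc X).desc (Cofan.mk (D.obj Y)
        (fun p : Σ A : Discrete J, (M.obj A ⟶ X) => ι p.1 (p.2 ≫ h))))
    {A : Discrete J} {X Y : B} (g : M.obj A ⟶ X) (h : X ⟶ Y) :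
    ι A g ≫ D.map h = ι A (g ≫ h) := by
  rw [hmap h]
  exact (hc X).fac _ ⟨⟨A, g⟩⟩

lemma ι_comp_counit {A : Discrete J}
    (hnat : ∀ {X Y : B} (g : M.obj A ⟶ X) (h : X ⟶ Y), ι A g ≫ D.map h = ι A (g ≫ h))
    (ε : D ⟶ 𝟭 B) (hε : ι A (𝟙 (M.obj A)) ≫ ε.app (M.obj A) = 𝟙 (M.obj A))
    {X : B} (g : M.obj A ⟶ X) :
    ι A g ≫ ε.app X = g := by
  have hg : ι A g = ι A (𝟙 _) ≫ D.map g := by rw [hnat, Category.id_comp]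
  rw [hg, Category.assoc, ε.naturality, ← Category.assoc, hε, Category.id_comp, Functor.id_map]

lemma ι_comp_comul {A : Discrete J}
    (hnat : ∀ {X Y : B} (g : M.obj A ⟶ X) (h : X ⟶ Y), ι A g ≫ D.map h = ι A (g ≫ h))
    (δ : D ⟶ D ⋙ D) (hδ : ι A (𝟙 (M.obj A)) ≫ δ.app (M.obj A)
        = ι A (𝟙 (M.obj A)) ≫ D.map (ι A (𝟙 (M.obj A))))
    {X : B} (g : M.obj A ⟶ X) :
    ι A g ≫ δ.app X = ι A (ι A g) := by
  have hg : ι A g = ι A (𝟙 _) ≫ D.map g := by rw [hnat, Category.id_comp]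
  conv_lhs => rw [hg]
  rw [Category.assoc, δ.naturality, ← Category.assoc, hδ, Functor.comp_map, Category.assoc,
    ← D.map_comp, hnat, Category.id_comp, ← hg]

end DensityComonad

theorem stmt_6_general {J : Type w}
    (M : Discrete J ⥤ B) (D : B ⥤ B)
    (ι : ∀ (A : Discrete J) {X : B}, (M.obj A ⟶ X) → (M.obj A ⟶ D.obj X))
    (hc : ∀ X : B, IsColimit (Cofan.mk (D.obj X)
      (fun p : Σ A : Discrete J, (M.obj A ⟶ X) => ι p.1 p.2)))
    (hmap : ∀ {X Y : B} (h : X ⟶ Y),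
      D.map h = (hc X).desc (Cofan.mk (D.obj Y)
        (fun p : Σ A : Discrete J, (M.obj A ⟶ X) => ι p.1 (p.2 ≫ h))))
    (ε : D ⟶ 𝟭 B) (δ : D ⟶ D ⋙ D)
    (hε : ∀ A : Discrete J, ι A (𝟙 (M.obj A)) ≫ ε.app (M.obj A) = 𝟙 (M.obj A))
    (hδ : ∀ A : Discrete J, ι A (𝟙 (M.obj A)) ≫ δ.app (M.obj A)
        = ι A (𝟙 (M.obj A)) ≫ D.map (ι A (𝟙 (M.obj A))))
    (X C Y : B) (hC : Connected' C) (ιC : C ⟶ X)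
    (ξ : X ⟶ D.obj X)
    (hξ1 : ξ ≫ ε.app X = 𝟙 X)
    (hξ2 : ξ ≫ δ.app X = ξ ≫ D.map ξ)
    (A : Discrete J) (f : M.obj A ⟶ X) (z : C ⟶ M.obj A)
    (hfact : ιC ≫ ξ = z ≫ ι A f) :
    ιC = z ≫ f ∧ f ≫ ξ = ι A f := by
  refine ⟨?_, ?_⟩
  · simpa only [Category.assoc, hξ1, Category.comp_id,
      ι_comp_counit (ι_comp_map hc hmap) ε (hε A)] using hfact =≫ ε.app X
  · have hsame : z ≫ ι A (ι A f) = z ≫ ι A (f ≫ ξ) := by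
      rw [← ι_comp_comul (ι_comp_map hc hmap) δ (hδ A), ← ι_comp_map hc hmap]
      simp only [← Category.assoc, ← hfact]
      rw [Category.assoc, Category.assoc, hξ2]
    have hindex := congrArg Sigma.fst
      (hC.eq_of_comp_inj_eq (hc (D.obj X)) (p := ⟨⟨A, ι A f⟩, z⟩) (q := ⟨⟨A, f ≫ ξ⟩, z⟩) hsame)
    exact (sigma_mk_injective hindex).symm

/-- for the discrete density comonad `D` of `M`, a `D`-coalgebra
`ξ : X ⟶ D(X)`, and a component inclusion `ι_C : C ⟶ X` with `C` connected, if
`ξ ∘ ι_C` factors as `ι_f ∘ z` through the coproduct inclusion `ι_f : M(A) ⟶ D(X)`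
for `f : M(A) ⟶ X`, then `ι_C = f ∘ z` and `ι_f = ξ ∘ f`. -/
theorem stmt_6 {J : Type w}
    (M : Discrete J ⥤ B) (D : B ⥤ B)
    (ι : ∀ (A : Discrete J) {X : B}, (M.obj A ⟶ X) → (M.obj A ⟶ D.obj X))
    (hc : ∀ X : B, IsColimit (Cofan.mk (D.obj X)
      (fun p : Σ A : Discrete J, (M.obj A ⟶ X) => ι p.1 p.2)))
    (hmap : ∀ {X Y : B} (h : X ⟶ Y),
      D.map h = (hc X).desc (Cofan.mk (D.obj Y)
        (fun p : Σ A : Discrete J, (M.obj A ⟶ X) => ι p.1 (p.2 ≫ h))))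
    (ε : D ⟶ 𝟭 B) (δ : D ⟶ D ⋙ D)
    (hε : ∀ A : Discrete J, ι A (𝟙 (M.obj A)) ≫ ε.app (M.obj A) = 𝟙 (M.obj A))
    (hδ : ∀ A : Discrete J, ι A (𝟙 (M.obj A)) ≫ δ.app (M.obj A)
        = ι A (𝟙 (M.obj A)) ≫ D.map (ι A (𝟙 (M.obj A))))
    (X C Y : B) (hC : Connected' C) (ιC : C ⟶ X) (ιY : Y ⟶ X)
    (hcomp : Nonempty (IsColimit (BinaryCofan.mk ιC ιY)))
    (ξ : X ⟶ D.obj X)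
    (hξ1 : ξ ≫ ε.app X = 𝟙 X)
    (hξ2 : ξ ≫ δ.app X = ξ ≫ D.map ξ)
    (A : Discrete J) (f : M.obj A ⟶ X) (z : C ⟶ M.obj A)
    (hfact : ιC ≫ ξ = z ≫ ι A f) :
    ιC = z ≫ f ∧ f ≫ ξ = ι A f :=
  stmt_6_general M D ι hc hmap ε δ hε hδ X C Y hC ιC ξ hξ1 hξ2 A f z hfact
end

section
/- Let B be a category in which every object is a coproduct of connected objects and all coproduct inclusions are monomorphisms. If a component inclusion ι : C ⟶ Y (C connected) factors through a monomorphism m : X ⟶ Y, then C is (isomorphic to) a component of X. -/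
/-!
Write `X` as a coproduct of connected objects. Connectedness of `C` puts `h : C ⟶ X` through
one summand `D`, and connectedness of `D` puts `D ⟶ X ⟶ Y` through `C` or through `Z`. It
cannot go through `Z`, for then `ι` would factor through both summands of `Y = C + Z`, against
the uniqueness in the connectedness of `C`. So we get `D ⟶ C`, and it is inverse to `C ⟶ D`
because `ι` and `D ⟶ X ⟶ Y` are monomorphisms.
-/

open CategoryTheory Limits

universe w v

variable {B : Type v} [Category.{w} B]

/-- A category is componental if every object is (isomorphic to) a coproduct of
connected objects and all coproduct inclusions are monomorphisms. -/
def Componental (B : Type v) [Category.{w} B] : Prop :=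
  (∀ X : B, ∃ (I : Type w) (f : I → B) (c : Cofan f),
      (∀ i, Connected' (f i)) ∧ Nonempty (IsColimit c) ∧ Nonempty (c.pt ≅ X)) ∧
  (∀ (I : Type w) (f : I → B) (c : Cofan f), Nonempty (IsColimit c) → ∀ i, Mono (c.inj i))

/-- `C` is a component of `X` if `C` is connected and `X ≅ C + Y` for some `Y`. -/
def IsComponentOf (C X : B) : Prop :=
  Connected' C ∧ ∃ (Y : B) (i₁ : C ⟶ X) (i₂ : Y ⟶ X),
    Nonempty (IsColimit (BinaryCofan.mk i₁ i₂))

-- `Connected'` only tests coproducts indexed by `Type w`, hence the `ULift`.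
def binaryCofanToULiftCofan {A Z : B} (c : BinaryCofan A Z) :
    Cofan fun j : ULift.{w} WalkingPair => (pair A Z).obj ⟨j.down⟩ :=
  Cofan.mk c.pt fun j => c.ι.app ⟨j.down⟩

def isColimitBinaryCofanToULiftCofan {A Z : B} {c : BinaryCofan A Z} (hc : IsColimit c) :
    IsColimit (binaryCofanToULiftCofan c) :=
  Cofan.IsColimit.mk _
    (fun t => BinaryCofan.IsColimit.desc hc (t.inj (ULift.up .left)) (t.inj (ULift.up .right)))
    (by
      rintro t ⟨_ | _⟩
      exacts [BinaryCofan.IsColimit.inl_desc hc _ _, BinaryCofan.IsColimit.inr_desc hc _ _])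
    (fun t m hm => BinaryCofan.IsColimit.hom_ext hc
      ((hm (ULift.up .left)).trans (BinaryCofan.IsColimit.inl_desc hc _ _).symm)
      ((hm (ULift.up .right)).trans (BinaryCofan.IsColimit.inr_desc hc _ _).symm))

theorem Connected'.exists_comp_inl_or_inr {C A Z : B} (hC : Connected' C) {c : BinaryCofan A Z}
    (hc : IsColimit c) (g : C ⟶ c.pt) :
    (∃ a : C ⟶ A, a ≫ c.inl = g) ∨ ∃ b : C ⟶ Z, b ≫ c.inr = g := by
  obtain ⟨⟨⟨_ | _⟩, a⟩, ha, -⟩ := hC _ _ (isColimitBinaryCofanToULiftCofan hc) g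
  exacts [.inl ⟨a, ha⟩, .inr ⟨a, ha⟩]

theorem Connected'.comp_inl_ne_comp_inr {C A Z : B} (hC : Connected' C) {c : BinaryCofan A Z}
    (hc : IsColimit c) (a : C ⟶ A) (b : C ⟶ Z) : a ≫ c.inl ≠ b ≫ c.inr := by
  intro hab
  obtain ⟨_, -, huniq⟩ := hC _ _ (isColimitBinaryCofanToULiftCofan hc) (a ≫ c.inl)
  have := (huniq ⟨ULift.up .left, a⟩ rfl).trans (huniq ⟨ULift.up .right, b⟩ hab.symm).symm
  cases this

theorem Componental.mono_inl (hB : Componental B) {A Z : B} {c : BinaryCofan A Z}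
    (hc : IsColimit c) : Mono c.inl :=
  hB.2 _ _ _ ⟨isColimitBinaryCofanToULiftCofan hc⟩ (ULift.up .left)

theorem Componental.exists_isColimit_cofanMk (hB : Componental B) (X : B) :
    ∃ (I : Type w) (f : I → B) (ι : ∀ i, f i ⟶ X),
      (∀ i, Connected' (f i)) ∧ Nonempty (IsColimit (Cofan.mk X ι)) := by
  obtain ⟨I, f, c, hconn, ⟨hc⟩, ⟨e⟩⟩ := hB.1 X
  exact ⟨I, f, fun i => c.inj i ≫ e.hom, hconn, ⟨hc.extendIso e.hom⟩⟩

noncomputable def isColimitBinaryCofanSplit {I : Type w} [DecidableEq I] {f : I → B} {c : Cofan f}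
    (hc : IsColimit c) (i : I) [HasCoproduct fun j : {j // j ≠ i} => f j] :
    IsColimit (BinaryCofan.mk (c.inj i) (Sigma.desc fun j : {j // j ≠ i} => c.inj j)) :=
  BinaryCofan.isColimitMk
    (fun s => Cofan.IsColimit.desc hc fun j =>
      if hj : j = i then eqToHom (congrArg f hj) ≫ s.inl
      else Sigma.ι (fun j : {j // j ≠ i} => f j) ⟨j, hj⟩ ≫ s.inr)
    (fun s => by
      rw [Cofan.IsColimit.fac, dif_pos rfl, eqToHom_refl]
      exact Category.id_comp _)
    (fun s => Sigma.hom_ext _ _ fun ⟨j, hj⟩ => by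
      rw [Sigma.ι_desc_assoc, Cofan.IsColimit.fac, dif_neg hj])
    (fun s m h₁ h₂ => Cofan.IsColimit.hom_ext hc _ _ fun j => by
      rw [Cofan.IsColimit.fac]
      by_cases hj : j = i
      · subst hj
        rw [dif_pos rfl, eqToHom_refl]
        exact h₁.trans (Category.id_comp _).symm
      · rw [dif_neg hj, ← h₂, Sigma.ι_desc_assoc])

theorem isComponentOf_of_isColimit [HasCoproducts.{w} B] {I : Type w} {f : I → B} {c : Cofan f}
    (hc : IsColimit c) (i : I) (hi : Connected' (f i)) : IsComponentOf (f i) c.pt := by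
  classical
  exact ⟨hi, _, _, _, ⟨isColimitBinaryCofanSplit hc i⟩⟩

/-- in a componental category, a component inclusion `ι : C ⟶ Y`
(`C` connected) which factors through a monomorphism `m : X ⟶ Y` exhibits `C` as
(isomorphic to) a component of `X`. -/
theorem stmt_7 [HasCoproducts.{w} B] (hB : Componental B)
    (C X Y Z : B) (hC : Connected' C) (ι : C ⟶ Y) (ιZ : Z ⟶ Y)
    (hcomp : Nonempty (IsColimit (BinaryCofan.mk ι ιZ)))
    (m : X ⟶ Y) (hm : Mono m) (h : C ⟶ X) (hf : h ≫ m = ι) :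
    ∃ C' : B, Nonempty (C ≅ C') ∧ IsComponentOf C' X := by
  obtain ⟨hY⟩ := hcomp
  obtain ⟨I, f, inj, hconn, ⟨hX⟩⟩ := hB.exists_isColimit_cofanMk X
  obtain ⟨⟨i, p⟩, hp, -⟩ := hC f _ hX h
  have hpι : p ≫ inj i ≫ m = ι := by
    rw [← Category.assoc, ← hf]
    exact congrArg (· ≫ m) hp
  refine ⟨f i, ?_, isComponentOf_of_isColimit hX i (hconn i)⟩
  obtain ⟨r, hr⟩ | ⟨r, hr⟩ := Connected'.exists_comp_inl_or_inr (hconn i) hY (inj i ≫ m)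
  · have hr : r ≫ ι = inj i ≫ m := hr
    have : Mono ι := hB.mono_inl hY
    have : Mono (inj i) := hB.2 _ _ _ ⟨hX⟩ i
    refine ⟨⟨p, r, ?_, ?_⟩⟩
    · rw [← cancel_mono ι, Category.assoc, hr, hpι, Category.id_comp]
    · rw [← cancel_mono (inj i ≫ m), Category.assoc, hpι, hr, Category.id_comp]
  · have hr : r ≫ ιZ = inj i ≫ m := hr
    refine absurd ?_ (hC.comp_inl_ne_comp_inr hY (𝟙 C) (p ≫ r))
    change 𝟙 C ≫ ι = (p ≫ r) ≫ ιZ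
    rw [Category.id_comp, Category.assoc, hr, hpι]
end

section
/- Let M : A ⥤ B be a functor from a discrete category A into a componental category B such that the image of M is component-based (every component of an object M(A) is again isomorphic to some M(A')), and suppose the pointwise density comonad D of M exists. Then every component C of an object X admitting a D-coalgebra ξ : X ⟶ D(X) is isomorphic to M(A) for some A in A. -/
/-! Connectedness of a component `C` of `X` puts the restriction of the coalgebra
`ξ : X ⟶ ∐ M(A)` into a single summand: `i₁ ≫ ξ = g ≫ ι_f` with `g : C ⟶ M(A)` and
`f : M(A) ⟶ X`. The counit law gives `g ≫ f = i₁`, and the comultiplication law, by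
uniqueness of that summand, gives `f ≫ ξ = ι_f`. In the componental category `g` factors
through a component `K` of `M(A)`, the composite `K ⟶ M(A) ⟶ X` lands in `C` (landing in the
complement would make `i₁` factor through it), and the resulting maps `C ⇄ K` are mutually
inverse because morphisms out of connected objects factor uniquely through coproduct
injections. Component-basedness identifies `K` with some `M(A')`. -/

open CategoryTheory Limits

universe w v

variable {B : Type v} [Category.{w} B]

namespace Connected'

variable {C : B} (hC : Connected' C)
include hC

theorem sigma_eq {I : Type w} {f : I → B} {c : Cofan f} (hc : IsColimit c) {i j : I}
    {a : C ⟶ f i} {b : C ⟶ f j} (h : a ≫ c.inj i = b ≫ c.inj j) :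
    (⟨i, a⟩ : Σ i, C ⟶ f i) = ⟨j, b⟩ := by
  obtain ⟨p, -, huniq⟩ := hC f c hc (b ≫ c.inj j)
  exact (huniq ⟨i, a⟩ h).trans (huniq ⟨j, b⟩ rfl).symm

theorem cancel_inj {I : Type w} {f : I → B} {c : Cofan f} (hc : IsColimit c) {i : I}
    {a b : C ⟶ f i} (h : a ≫ c.inj i = b ≫ c.inj i) : a = b :=
  eq_of_heq (Sigma.mk.inj (hC.sigma_eq hc h)).2

end Connected'

section BinaryCoproduct

variable {P Q X : B} (i₁ : P ⟶ X) (i₂ : Q ⟶ X)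

/-- The binary cofan `(i₁, i₂)` reindexed by `PUnit ⊕ PUnit`, so that `Connected'`,
which speaks about coproducts indexed by `Type w`, applies to it. -/
abbrev sumCofan : Cofan (Sum.elim (fun _ : PUnit.{w + 1} => P) fun _ : PUnit.{w + 1} => Q) :=
  Cofan.mk X (Cofan.combPairHoms (Cofan.mk P fun _ => 𝟙 P) (Cofan.mk Q fun _ => 𝟙 Q)
    (BinaryCofan.mk i₁ i₂))

@[simp]
theorem sumCofan_inj_inl (u : PUnit) : (sumCofan i₁ i₂).inj (.inl u) = i₁ :=
  Category.id_comp _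

@[simp]
theorem sumCofan_inj_inr (u : PUnit) : (sumCofan i₁ i₂).inj (.inr u) = i₂ :=
  Category.id_comp _

variable {i₁ i₂}

def isColimitSumCofan (h : IsColimit (BinaryCofan.mk i₁ i₂)) : IsColimit (sumCofan i₁ i₂) :=
  Cofan.combPairIsColimit (Cofan.isColimitMkOfUnique (Iso.refl P) _)
    (Cofan.isColimitMkOfUnique (Iso.refl Q) _) h

namespace Connected'

variable {C : B} (hC : Connected' C) (h : IsColimit (BinaryCofan.mk i₁ i₂))
include hC h

theorem factors_inl_or_inr (g : C ⟶ X) : (∃ k, k ≫ i₁ = g) ∨ ∃ k, k ≫ i₂ = g := by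
  obtain ⟨⟨_ | _, k⟩, hk, -⟩ := hC _ _ (isColimitSumCofan h) g
  · exact .inl ⟨k, by simpa using hk⟩
  · exact .inr ⟨k, by simpa using hk⟩

theorem inl_ne_inr (a : C ⟶ P) (b : C ⟶ Q) : a ≫ i₁ ≠ b ≫ i₂ := fun hab =>
  Sum.inl_ne_inr (congrArg Sigma.fst <| hC.sigma_eq (isColimitSumCofan h)
    (i := .inl .unit) (j := .inr .unit) (a := a) (b := b) (by simpa using hab))

theorem cancel_inl {a b : C ⟶ P} (hab : a ≫ i₁ = b ≫ i₁) : a = b :=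
  hC.cancel_inj (isColimitSumCofan h) (i := .inl .unit) (by simpa using hab)

end Connected'

end BinaryCoproduct

theorem exists_isColimit_binaryCofan_inj [HasCoproducts.{w} B] {I : Type w} {f : I → B}
    {X : B} {ι : ∀ i, f i ⟶ X} (hc : IsColimit (Cofan.mk X ι)) (j : I) :
    ∃ (Y : B) (r : Y ⟶ X), Nonempty (IsColimit (BinaryCofan.mk (ι j) r)) := by
  classical
  let rest (i : {i // i ≠ j}) : B := f i
  refine ⟨∐ rest, Sigma.desc fun i => ι i, ⟨BinaryCofan.isColimitMk
    (fun s => Cofan.IsColimit.desc hc fun i =>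
      if hi : i = j then eqToHom (congrArg f hi) ≫ s.inl else Sigma.ι rest ⟨i, hi⟩ ≫ s.inr)
    (fun s => (Cofan.IsColimit.fac hc _ j).trans ((dif_pos rfl).trans (Category.id_comp _)))
    (fun s => Sigma.hom_ext _ _ fun ⟨i, hi⟩ => by
      simpa using (Cofan.IsColimit.fac hc _ i).trans (dif_neg hi))
    (fun s m h₁ h₂ => Cofan.IsColimit.hom_ext hc _ _ fun i => ?_)⟩⟩
  rw [Cofan.IsColimit.fac]
  split_ifs with hi
  · subst hi
    exact h₁.trans (Category.id_comp _).symm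
  · simpa [rest] using congr(Sigma.ι rest ⟨i, hi⟩ ≫ $h₂)

namespace Componental

variable (hB : Componental B)
include hB

theorem exists_isColimit_cofan (X : B) :
    ∃ (I : Type w) (f : I → B) (ι : ∀ i, f i ⟶ X),
      (∀ i, Connected' (f i)) ∧ Nonempty (IsColimit (Cofan.mk X ι)) := by
  obtain ⟨I, f, c, hconn, ⟨hc⟩, ⟨e⟩⟩ := hB.1 X
  exact ⟨I, f, fun i => c.inj i ≫ e.hom, hconn,
    ⟨hc.ofIsoColimit (Cofan.ext e fun _ => rfl)⟩⟩

theorem exists_component_factorization [HasCoproducts.{w} B] {C Z : B} (hC : Connected' C)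
    (g : C ⟶ Z) :
    ∃ (K Y : B) (m : K ⟶ Z) (r : Y ⟶ Z) (g' : C ⟶ K),
      Connected' K ∧ Nonempty (IsColimit (BinaryCofan.mk m r)) ∧ g' ≫ m = g := by
  obtain ⟨I, f, ι, hconn, ⟨hc⟩⟩ := hB.exists_isColimit_cofan Z
  obtain ⟨⟨j, g'⟩, hg', -⟩ := hC f _ hc g
  obtain ⟨Y, r, hr⟩ := exists_isColimit_binaryCofan_inj hc j
  exact ⟨f j, Y, ι j, r, g', hconn j, hr, hg'⟩

end Componental

section DensityComonad

variable {J : Type w} {M : Discrete J ⥤ B} {D : B ⥤ B}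
  {ι : ∀ (A : Discrete J) {X : B}, (M.obj A ⟶ X) → (M.obj A ⟶ D.obj X)}
  (hc : ∀ X : B, IsColimit (Cofan.mk (D.obj X)
    (fun p : Σ A : Discrete J, (M.obj A ⟶ X) => ι p.1 p.2)))
  (hmap : ∀ {X Y : B} (h : X ⟶ Y),
    D.map h = (hc X).desc (Cofan.mk (D.obj Y)
      (fun p : Σ A : Discrete J, (M.obj A ⟶ X) => ι p.1 (p.2 ≫ h))))
include hmap

theorem ι_comp_map_s9 (A : Discrete J) {X Y : B} (f : M.obj A ⟶ X) (k : X ⟶ Y) :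
    ι A f ≫ D.map k = ι A (f ≫ k) := by
  rw [hmap k]
  exact (hc X).fac _ ⟨⟨A, f⟩⟩

theorem ι_id_comp_map (A : Discrete J) {X : B} (f : M.obj A ⟶ X) :
    ι A (𝟙 (M.obj A)) ≫ D.map f = ι A f := by
  rw [ι_comp_map_s9 hc hmap, Category.id_comp]

theorem ι_comp_ε_app {ε : D ⟶ 𝟭 B}
    (hε : ∀ A : Discrete J, ι A (𝟙 (M.obj A)) ≫ ε.app (M.obj A) = 𝟙 (M.obj A))
    (A : Discrete J) {X : B} (f : M.obj A ⟶ X) : ι A f ≫ ε.app X = f := by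
  rw [← ι_id_comp_map hc hmap, Category.assoc, ε.naturality, reassoc_of% hε]
  rfl

theorem ι_comp_δ_app {δ : D ⟶ D ⋙ D}
    (hδ : ∀ A : Discrete J, ι A (𝟙 (M.obj A)) ≫ δ.app (M.obj A)
      = ι A (𝟙 (M.obj A)) ≫ D.map (ι A (𝟙 (M.obj A))))
    (A : Discrete J) {X : B} (f : M.obj A ⟶ X) : ι A f ≫ δ.app X = ι A (ι A f) := by
  rw [← ι_id_comp_map hc hmap A f, Category.assoc, δ.naturality, reassoc_of% hδ]
  dsimp only [Functor.comp_map]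
  rw [← D.map_comp, ι_id_comp_map hc hmap, ι_id_comp_map hc hmap]

theorem exists_factor_of_coalgebra {ε : D ⟶ 𝟭 B} {δ : D ⟶ D ⋙ D}
    (hε : ∀ A : Discrete J, ι A (𝟙 (M.obj A)) ≫ ε.app (M.obj A) = 𝟙 (M.obj A))
    (hδ : ∀ A : Discrete J, ι A (𝟙 (M.obj A)) ≫ δ.app (M.obj A)
      = ι A (𝟙 (M.obj A)) ≫ D.map (ι A (𝟙 (M.obj A))))
    {X : B} {ξ : X ⟶ D.obj X} (hξ1 : ξ ≫ ε.app X = 𝟙 X) (hξ2 : ξ ≫ δ.app X = ξ ≫ D.map ξ)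
    {C : B} (hC : Connected' C) (u : C ⟶ X) :
    ∃ (A : Discrete J) (f : M.obj A ⟶ X) (g : C ⟶ M.obj A),
      g ≫ f = u ∧ g ≫ ι A f = u ≫ ξ ∧ ι A f = f ≫ ξ := by
  obtain ⟨⟨⟨A, f⟩, g⟩, hg : g ≫ ι A f = u ≫ ξ, -⟩ := hC _ _ (hc X) (u ≫ ξ)
  refine ⟨A, f, g, ?_, hg, ?_⟩
  · simpa [ι_comp_ε_app hc hmap hε, hξ1] using congr($hg ≫ ε.app X)
  · have hcomult : g ≫ ι A (ι A f) = g ≫ ι A (f ≫ ξ) := by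
      rw [← ι_comp_δ_app hc hmap hδ, ← ι_comp_map_s9 hc hmap, reassoc_of% hg, reassoc_of% hg, hξ2]
    exact eq_of_heq (Sigma.mk.inj (congrArg Sigma.fst
      (hC.sigma_eq (hc (D.obj X)) (i := ⟨A, ι A f⟩) (j := ⟨A, f ≫ ξ⟩) hcomult))).2

theorem exists_iso_component_of_coalgebra [HasCoproducts.{w} B] (hB : Componental B)
    {ε : D ⟶ 𝟭 B} {δ : D ⟶ D ⋙ D}
    (hε : ∀ A : Discrete J, ι A (𝟙 (M.obj A)) ≫ ε.app (M.obj A) = 𝟙 (M.obj A))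
    (hδ : ∀ A : Discrete J, ι A (𝟙 (M.obj A)) ≫ δ.app (M.obj A)
      = ι A (𝟙 (M.obj A)) ≫ D.map (ι A (𝟙 (M.obj A))))
    {X : B} {ξ : X ⟶ D.obj X} (hξ1 : ξ ≫ ε.app X = 𝟙 X) (hξ2 : ξ ≫ δ.app X = ξ ≫ D.map ξ)
    {C : B} (hcomp : IsComponentOf C X) :
    ∃ (A : Discrete J) (K : B), IsComponentOf K (M.obj A) ∧ Nonempty (C ≅ K) := by
  obtain ⟨hC, Y, i₁, i₂, ⟨hX⟩⟩ := hcomp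
  obtain ⟨A, f, g, hgf, hgξ, hfξ⟩ := exists_factor_of_coalgebra hc hmap hε hδ hξ1 hξ2 hC i₁
  obtain ⟨K, W, m, r, g', hK, ⟨hm⟩, hg'm⟩ := hB.exists_component_factorization hC g
  obtain ⟨k, hk⟩ : ∃ k, k ≫ i₁ = m ≫ f := by
    refine (hK.factors_inl_or_inr hX (m ≫ f)).resolve_right fun ⟨k, hk⟩ => ?_
    refine hC.inl_ne_inr hX (𝟙 C) (g' ≫ k) ?_
    rw [Category.assoc, hk, reassoc_of% hg'm, hgf, Category.id_comp]
  have hg'k : g' ≫ k = 𝟙 C :=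
    hC.cancel_inl hX (by rw [Category.assoc, hk, reassoc_of% hg'm, hgf, Category.id_comp])
  have hkg : k ≫ g = m :=
    hK.cancel_inj (hc X) (i := ⟨A, f⟩) (show (k ≫ g) ≫ ι A f = m ≫ ι A f by
      rw [Category.assoc, hgξ, reassoc_of% hk, hfξ])
  have hkg' : k ≫ g' = 𝟙 K :=
    hK.cancel_inl hm (by rw [Category.assoc, hg'm, hkg, Category.id_comp])
  exact ⟨A, K, ⟨hK, W, m, r, ⟨hm⟩⟩, ⟨⟨g', k, hg'k, hkg'⟩⟩⟩

end DensityComonad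

/-- for `M : A ⥤ B` from a discrete category into a componental category,
with component-based image and pointwise density comonad `D`, every component `C` of an
object `X` admitting a `D`-coalgebra `ξ : X ⟶ D(X)` is isomorphic to some `M(A)`. -/
theorem stmt_9 {J : Type w} [HasCoproducts.{w} B]
    (M : Discrete J ⥤ B) (D : B ⥤ B)
    (ι : ∀ (A : Discrete J) {X : B}, (M.obj A ⟶ X) → (M.obj A ⟶ D.obj X))
    (hc : ∀ X : B, IsColimit (Cofan.mk (D.obj X)
      (fun p : Σ A : Discrete J, (M.obj A ⟶ X) => ι p.1 p.2)))
    (hmap : ∀ {X Y : B} (h : X ⟶ Y),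
      D.map h = (hc X).desc (Cofan.mk (D.obj Y)
        (fun p : Σ A : Discrete J, (M.obj A ⟶ X) => ι p.1 (p.2 ≫ h))))
    (ε : D ⟶ 𝟭 B) (δ : D ⟶ D ⋙ D)
    (hε : ∀ A : Discrete J, ι A (𝟙 (M.obj A)) ≫ ε.app (M.obj A) = 𝟙 (M.obj A))
    (hδ : ∀ A : Discrete J, ι A (𝟙 (M.obj A)) ≫ δ.app (M.obj A)
        = ι A (𝟙 (M.obj A)) ≫ D.map (ι A (𝟙 (M.obj A))))
    (hB : Componental B)
    (hbased : ∀ (A : Discrete J) (C' : B), IsComponentOf C' (M.obj A) →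
      ∃ A' : Discrete J, Nonempty (C' ≅ M.obj A'))
    (X : B) (ξ : X ⟶ D.obj X)
    (hξ1 : ξ ≫ ε.app X = 𝟙 X)
    (hξ2 : ξ ≫ δ.app X = ξ ≫ D.map ξ)
    (C : B) (hcomp : IsComponentOf C X) :
    ∃ A : Discrete J, Nonempty (C ≅ M.obj A) := by
  obtain ⟨A, K, hK, ⟨e⟩⟩ := exists_iso_component_of_coalgebra hc hmap hB hε hδ hξ1 hξ2 hcomp
  obtain ⟨A', ⟨φ⟩⟩ := hbased A K hK
  exact ⟨A', ⟨e ≪≫ φ⟩⟩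
end

section
/- If all values of a functor M : A ⥤ B from a discrete category A lie in the image of the Eilenberg–Moore forgetful functor of a comonad C on B (i.e., each M(A) carries a C-coalgebra structure φ_A : M(A) ⟶ C(M(A))), and the density comonad D of M exists, then the unique natural transformation φ* : D ⟹ C with φ* M ∘ η = φ is a morphism of comonads. -/
/-!
By the uniqueness half of the universal property of `D = Lan_M M`, two transformations out of
`D` that agree after precomposition with `η` are equal. Both comonad-morphism laws for `φ*` are
such equalities, and after precomposition with `η` they reduce, via `φ* M ∘ η = φ` and the
equations of `ε^D` and `δ^D` on `η`, to the coalgebra laws of the `φ_A`.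
-/

open CategoryTheory

universe w v

namespace CategoryTheory

variable {A B : Type*} [Category A] [Category B] {M : A ⥤ B}

/-- `η` exhibits `D` as the left Kan extension of `M` along itself. -/
def IsDensityUnit {D : B ⥤ B} (η : M ⟶ M ⋙ D) : Prop :=
  ∀ (K : B ⥤ B) (ψ : M ⟶ M ⋙ K), ∃! s : D ⟶ K, ∀ a, ψ.app a = η.app a ≫ s.app (M.obj a)

namespace IsDensityUnit

lemma hom_ext {D K : B ⥤ B} {η : M ⟶ M ⋙ D} (hη : IsDensityUnit η) {s s' : D ⟶ K}
    (h : ∀ a, η.app a ≫ s.app (M.obj a) = η.app a ≫ s'.app (M.obj a)) : s = s' := by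
  obtain ⟨_, -, huniq⟩ := hη K (η ≫ Functor.whiskerLeft M s)
  exact (huniq s fun _ => rfl).trans (huniq s' fun a => h a).symm

variable {D C : Comonad B} {η : M ⟶ M ⋙ D.toFunctor} {φ : ∀ a, M.obj a ⟶ C.obj (M.obj a)}
  {lam : D.toFunctor ⟶ C.toFunctor}

lemma comp_ε (hη : IsDensityUnit η) (hDε : ∀ a, η.app a ≫ D.ε.app (M.obj a) = 𝟙 (M.obj a))
    (hφε : ∀ a, φ a ≫ C.ε.app (M.obj a) = 𝟙 (M.obj a))
    (hlam : ∀ a, η.app a ≫ lam.app (M.obj a) = φ a) :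
    lam ≫ C.ε = D.ε :=
  hη.hom_ext fun a => by simp only [NatTrans.comp_app, reassoc_of% hlam a, hφε, hDε]

lemma comp_δ (hη : IsDensityUnit η)
    (hDδ : ∀ a, η.app a ≫ D.δ.app (M.obj a) = η.app a ≫ D.map (η.app a))
    (hφδ : ∀ a, φ a ≫ C.δ.app (M.obj a) = φ a ≫ C.map (φ a))
    (hlam : ∀ a, η.app a ≫ lam.app (M.obj a) = φ a) :
    lam ≫ C.δ = D.δ ≫ Functor.whiskerLeft D.toFunctor lam ≫ Functor.whiskerRight lam C.toFunctor :=
  hη.hom_ext fun a => by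
    calc η.app a ≫ lam.app (M.obj a) ≫ C.δ.app (M.obj a)
        = φ a ≫ C.map (φ a) := by rw [reassoc_of% hlam a, hφδ]
      _ = η.app a ≫ D.map (η.app a) ≫ lam.app (D.obj (M.obj a)) ≫ C.map (lam.app (M.obj a)) := by
          erw [lam.naturality_assoc (η.app a), reassoc_of% hlam a, ← C.map_comp, hlam a]
      _ = η.app a ≫ D.δ.app (M.obj a) ≫ lam.app (D.obj (M.obj a)) ≫ C.map (lam.app (M.obj a)) := by
          rw [reassoc_of% hDδ a]

/-- The comonad morphism `φ* : D ⟶ C` induced by the coalgebras `φ a`. -/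
def comonadHom (hη : IsDensityUnit η) (hDε : ∀ a, η.app a ≫ D.ε.app (M.obj a) = 𝟙 (M.obj a))
    (hDδ : ∀ a, η.app a ≫ D.δ.app (M.obj a) = η.app a ≫ D.map (η.app a))
    (hφε : ∀ a, φ a ≫ C.ε.app (M.obj a) = 𝟙 (M.obj a))
    (hφδ : ∀ a, φ a ≫ C.δ.app (M.obj a) = φ a ≫ C.map (φ a))
    (hlam : ∀ a, η.app a ≫ lam.app (M.obj a) = φ a) : D ⟶ C where
  toNatTrans := lam
  app_ε := congr_app (hη.comp_ε hDε hφε hlam)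
  app_δ := congr_app (hη.comp_δ hDδ hφδ hlam)

end IsDensityUnit

end CategoryTheory

/-- if each value `M(A)` of a functor `M : A ⥤ B` from a discrete
category carries a `C`-coalgebra structure `φ_A : M(A) ⟶ C(M(A))`, and the density
comonad `Dm` of `M` exists (with universal transformation `η` and comonad structure
determined by `ε Dm M ∘ η = id` and `δ Dm M ∘ η = Dm(η) ∘ η`), then the unique natural
transformation `lam : Dm ⟹ C` with `lam M ∘ η = φ` is a morphism of comonads. -/
theorem stmt_11 {J : Type w} {B : Type v} [Category.{w} B]
    (M : Discrete J ⥤ B) (Dm C : Comonad B)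
    (η : M ⟶ M ⋙ Dm.toFunctor)
    (huniv : ∀ (K : B ⥤ B) (ψ : M ⟶ M ⋙ K),
      ∃! s : Dm.toFunctor ⟶ K, ∀ A : Discrete J, ψ.app A = η.app A ≫ s.app (M.obj A))
    (hDε : ∀ A : Discrete J, η.app A ≫ Dm.ε.app (M.obj A) = 𝟙 (M.obj A))
    (hDδ : ∀ A : Discrete J,
      η.app A ≫ Dm.δ.app (M.obj A) = η.app A ≫ Dm.toFunctor.map (η.app A))
    (φ : ∀ A : Discrete J, M.obj A ⟶ C.toFunctor.obj (M.obj A))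
    (hφε : ∀ A : Discrete J, φ A ≫ C.ε.app (M.obj A) = 𝟙 (M.obj A))
    (hφδ : ∀ A : Discrete J,
      φ A ≫ C.δ.app (M.obj A) = φ A ≫ C.toFunctor.map (φ A))
    (lam : Dm.toFunctor ⟶ C.toFunctor)
    (hlam : ∀ A : Discrete J, η.app A ≫ lam.app (M.obj A) = φ A) :
    (∀ X : B, lam.app X ≫ C.ε.app X = Dm.ε.app X) ∧
    (∀ X : B, lam.app X ≫ C.δ.app X
        = Dm.δ.app X ≫ Dm.toFunctor.map (lam.app X) ≫ lam.app (C.toFunctor.obj X)) := by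
  let φStar : Dm ⟶ C := IsDensityUnit.comonadHom huniv hDε hDδ hφε hφδ hlam
  exact ⟨φStar.app_ε, fun X =>
    (φStar.app_δ X).trans (congrArg (Dm.δ.app X ≫ ·) (lam.naturality _).symm)⟩
end

section
/- Let M : A ⥤ B be a functor from a discrete category such that every object M(A) is finitely presentable in B, and suppose the pointwise density comonad D of M exists. Then the functor D preserves filtered colimits. -/
/-!
Since `D X` is the coproduct of the `N A` over all `f : M A ⟶ X`, a map `D X ⟶ Y` is a family of
functions `(M A ⟶ X) → (N A ⟶ Y)`. When each `Hom(M A, -)` preserves the colimit `X = colim F`,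
such a function is the same as a compatible family of functions `(M A ⟶ F k) → (N A ⟶ Y)`, and
these are exactly the data of a cocone on `F ⋙ D` with vertex `Y`. So `D` preserves every colimit
that all the `Hom(M A, -)` preserve, in particular filtered colimits when the `M A` are finitely
presentable.
-/

open CategoryTheory Limits

universe w v

variable {B : Type v} [Category.{w} B]

/-- An object is finitely presentable if its covariant hom-functor preserves filtered
colimits. -/
def FinitelyPresentable (X : B) : Prop :=
  PreservesFilteredColimits.{w} (coyoneda.obj (Opposite.op X))

namespace HomIndexedCoproduct

variable {C E I : Type*} [Category.{w} C] [Category.{w} E] {M : I → C} {N : I → E} {D : C ⥤ E}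
  (ι : ∀ (A : I) {X : C}, (M A ⟶ X) → (N A ⟶ D.obj X))

theorem ι_comp_map
    (hc : ∀ X : C, IsColimit (Cofan.mk (D.obj X) fun p : Σ A, (M A ⟶ X) => ι p.1 p.2))
    (hmap : ∀ {X Y : C} (h : X ⟶ Y),
      D.map h = (hc X).desc (Cofan.mk (D.obj Y) fun p : Σ A, (M A ⟶ X) => ι p.1 (p.2 ≫ h)))
    (A : I) {X Y : C} (g : M A ⟶ X) (h : X ⟶ Y) :
    ι A g ≫ D.map h = ι A (g ≫ h) := by
  rw [hmap h]
  exact (hc X).fac _ ⟨⟨A, g⟩⟩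

variable {ι} (hnat : ∀ (A : I) {X Y : C} (g : M A ⟶ X) (h : X ⟶ Y), ι A g ≫ D.map h = ι A (g ≫ h))
  {K : Type*} [Category K] {F : K ⥤ C}
include hnat

def homCocone (s : Cocone (F ⋙ D)) (A : I) : Cocone (F ⋙ coyoneda.obj (Opposite.op (M A))) where
  pt := N A ⟶ s.pt
  ι :=
    { app := fun k => ↾fun g => ι A g ≫ s.ι.app k
      naturality := fun k k' u => by
        ext g
        simpa [← hnat] using congrArg (ι A g ≫ ·) (s.w u) }

def isColimitMapCocone
    (hc : ∀ X : C, IsColimit (Cofan.mk (D.obj X) fun p : Σ A, (M A ⟶ X) => ι p.1 p.2))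
    (c : Cocone F) (hco : ∀ A, IsColimit ((coyoneda.obj (Opposite.op (M A))).mapCocone c)) :
    IsColimit (D.mapCocone c) := by
  let desc (s : Cocone (F ⋙ D)) : D.obj c.pt ⟶ s.pt :=
    (hc c.pt).desc (Cofan.mk s.pt fun p => (hco p.1).desc (homCocone hnat s p.1) p.2)
  have ι_comp_desc (s : Cocone (F ⋙ D)) (A : I) (f : M A ⟶ c.pt) :
      ι A f ≫ desc s = (hco A).desc (homCocone hnat s A) f :=
    (hc c.pt).fac _ ⟨⟨A, f⟩⟩
  refine ⟨desc, fun s k => (hc _).hom_ext ?_, fun s m hm => (hc _).hom_ext ?_⟩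
  · rintro ⟨⟨A, g⟩⟩
    change ι A g ≫ D.map (c.ι.app k) ≫ desc s = ι A g ≫ s.ι.app k
    rw [← Category.assoc, hnat, ι_comp_desc]
    exact ConcreteCategory.congr_hom ((hco A).fac _ k) g
  · rintro ⟨⟨A, f⟩⟩
    have hm' : ↾(fun f => ι A f ≫ m) = (hco A).desc (homCocone hnat s A) :=
      (hco A).uniq (homCocone hnat s A) _ fun k => by
        ext g
        change ι A (g ≫ c.ι.app k) ≫ m = ι A g ≫ s.ι.app k
        rw [← hnat, Category.assoc]
        exact congrArg _ (hm k)
    exact (ConcreteCategory.congr_hom hm' f).trans (ι_comp_desc s A f).symm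

end HomIndexedCoproduct

/-- if `M : A ⥤ B` from a discrete category has all its values finitely
presentable and its pointwise density comonad `D` exists (given at `X` by
`∐_{A, f : M(A) ⟶ X} M(A)`), then `D` preserves filtered colimits. -/
theorem stmt_12 {J : Type w}
    (M : Discrete J ⥤ B) (D : B ⥤ B)
    (ι : ∀ (A : Discrete J) {X : B}, (M.obj A ⟶ X) → (M.obj A ⟶ D.obj X))
    (hc : ∀ X : B, IsColimit (Cofan.mk (D.obj X)
      (fun p : Σ A : Discrete J, (M.obj A ⟶ X) => ι p.1 p.2)))
    (hmap : ∀ {X Y : B} (h : X ⟶ Y),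
      D.map h = (hc X).desc (Cofan.mk (D.obj Y)
        (fun p : Σ A : Discrete J, (M.obj A ⟶ X) => ι p.1 (p.2 ≫ h))))
    (hfp : ∀ A : Discrete J, FinitelyPresentable (M.obj A)) :
    PreservesFilteredColimits.{w} D := by
  have hnat := HomIndexedCoproduct.ι_comp_map ι hc hmap
  refine ⟨fun K _ _ => ⟨fun {F} => ⟨fun {c} hcol => ⟨?_⟩⟩⟩⟩
  refine HomIndexedCoproduct.isColimitMapCocone hnat hc c fun A => ?_
  have : PreservesFilteredColimits.{w} (coyoneda.obj (Opposite.op (M.obj A))) := hfp A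
  exact isColimitOfPreserves _ hcol
end
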